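/- arXiv:1601.06279 — 3 statements merged into one kernel-verified Lean document; each statement's English description precedes it below -/
import Mathlib

section
/- Let f : M → M be a continuous map on a compact metric space M. Every weak pseudo-physical measure μ is f-invariant. -/
/-!
A weak pseudo-physical measure has nonempty `ε`-pseudo basins `A_{ε,n}(μ)` for infinitely many
`n`, since `log Leb ∅ = -∞`. Hence `μ` is a weak* limit of empirical measures `σ_{n_k}(x_k)` with
`n_k → ∞`. For a bounded continuous `g`, the integrals of `g ∘ f` and `g` against `σ_n(x)` differ
by the telescoping term `(g (f^[n] x) - g x) / n`, which tends to `0`; so `μ` integrates `g ∘ f`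
and `g` alike, i.e. `f_* μ = μ`.
-/

open MeasureTheory Filter Topology
open scoped ENNReal

/-- The empiric probability measure `σ_n(x) = (1/n) ∑_{j<n} δ_{f^j(x)}`. -/
noncomputable def empiric {M : Type*} [MeasurableSpace M] (f : M → M) (x : M) (n : ℕ) :
    Measure M :=
  (n : ℝ≥0∞)⁻¹ • ∑ j ∈ Finset.range n, Measure.dirac (f^[j] x)

/-- `dstar` is a metric on the Borel probability measures on `M` inducing the weak* topology. -/
structure IsWeakStarMetric (M : Type*) [MeasurableSpace M] [TopologicalSpace M]
    (dstar : Measure M → Measure M → ℝ) : Prop where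
  nonneg : ∀ μ ν, 0 ≤ dstar μ ν
  symm : ∀ μ ν, dstar μ ν = dstar ν μ
  triangle : ∀ μ ν ρ, dstar μ ρ ≤ dstar μ ν + dstar ν ρ
  eq_zero_iff : ∀ μ ν : Measure M, IsProbabilityMeasure μ → IsProbabilityMeasure ν →
    (dstar μ ν = 0 ↔ μ = ν)
  tendsto_iff : ∀ (ν : ℕ → Measure M) (μ : Measure M),
    (∀ n, IsProbabilityMeasure (ν n)) → IsProbabilityMeasure μ →
    (Tendsto (fun n => dstar (ν n) μ) atTop (𝓝 0) ↔
      ∀ g : C(M, ℝ), Tendsto (fun n => ∫ x, g x ∂(ν n)) atTop (𝓝 (∫ x, g x ∂μ)))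

/-- The `ε`-pseudo basin of `μ` up to time `n`: `A_{ε,n}(μ) = {x : dist*(σ_n(x),μ) < ε}`. -/
def basinUpTo {M : Type*} [MeasurableSpace M] (f : M → M)
    (dstar : Measure M → Measure M → ℝ) (μ : Measure M) (ε : ℝ) (n : ℕ) : Set M :=
  {x | dstar (empiric f x n) μ < ε}

/-- The exponential rate `(1/n) log Leb(A n)`, valued in the extended reals. -/
noncomputable def logRate {M : Type*} [MeasurableSpace M] (Leb : Measure M) (A : ℕ → Set M)
    (n : ℕ) : EReal :=
  ENNReal.log (Leb (A n)) * (((n : ℝ)⁻¹ : ℝ) : EReal)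

/-- `μ` is weak pseudo-physical: `limsup_n (1/n) log Leb(A_{ε,n}(μ)) = 0` for all `ε > 0`. -/
def WeakPseudoPhysical {M : Type*} [MeasurableSpace M] (f : M → M)
    (dstar : Measure M → Measure M → ℝ) (Leb μ : Measure M) : Prop :=
  ∀ ε : ℝ, 0 < ε →
    Filter.atTop.limsup (logRate Leb (basinUpTo f dstar μ ε)) = 0

open scoped BoundedContinuousFunction

section Empiric

variable {M : Type*} [MeasurableSpace M] (f : M → M) (x : M)

theorem isProbabilityMeasure_empiric {n : ℕ} (hn : n ≠ 0) :
    IsProbabilityMeasure (empiric f x n) := by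
  constructor
  simp only [empiric, Measure.smul_apply, Measure.coe_finsetSum, Finset.sum_apply,
    measure_univ, Finset.sum_const, Finset.card_range, nsmul_eq_mul, mul_one, smul_eq_mul]
  exact ENNReal.inv_mul_cancel (Nat.cast_ne_zero.mpr hn) (ENNReal.natCast_ne_top n)

theorem integral_empiric (n : ℕ) {g : M → ℝ} (hg : StronglyMeasurable g) :
    ∫ y, g y ∂(empiric f x n) = (n : ℝ)⁻¹ * ∑ j ∈ Finset.range n, g (f^[j] x) := by
  rw [empiric, integral_smul_measure,
    integral_finsetSum_measure fun j _ => integrable_dirac' hg ENNReal.coe_lt_top]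
  simp [integral_dirac' _ _ hg, ENNReal.toReal_inv]

theorem integral_empiric_comp_sub (n : ℕ) (hf : Measurable f) {g : M → ℝ}
    (hg : StronglyMeasurable g) :
    ∫ y, g (f y) ∂(empiric f x n) - ∫ y, g y ∂(empiric f x n) =
      (n : ℝ)⁻¹ * (g (f^[n] x) - g x) := by
  rw [integral_empiric f x n (g := fun y => g (f y)) (hg.comp_measurable hf),
    integral_empiric f x n hg, ← mul_sub, ← Finset.sum_sub_distrib]
  simp_rw [← Function.iterate_succ_apply' f]
  rw [Finset.sum_range_sub (fun j => g (f^[j] x)), Function.iterate_zero_apply]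

variable [TopologicalSpace M] [OpensMeasurableSpace M]

theorem tendsto_integral_empiric_comp_sub {x : ℕ → M} {n : ℕ → ℕ} (hn : Tendsto n atTop atTop)
    (hf : Measurable f) (g : M →ᵇ ℝ) :
    Tendsto (fun k => ∫ y, g (f y) ∂(empiric f (x k) (n k)) - ∫ y, g y ∂(empiric f (x k) (n k)))
      atTop (𝓝 0) := by
  have hg := g.continuous.stronglyMeasurable
  simp_rw [integral_empiric_comp_sub f _ _ hf hg]
  have hbound : Tendsto (fun k => (n k : ℝ)⁻¹ * (2 * ‖g‖)) atTop (𝓝 0) := by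
    simpa using (tendsto_inv_atTop_zero.comp (tendsto_natCast_atTop_atTop.comp hn)).mul_const
      (2 * ‖g‖)
  refine squeeze_zero_norm (fun k => ?_) hbound
  rw [norm_mul, norm_inv, Real.norm_natCast]
  exact mul_le_mul_of_nonneg_left (g.dist_le_two_norm _ _) (by positivity)

end Empiric

theorem map_eq_self_of_tendsto_integral_empiric {M : Type*} [TopologicalSpace M]
    [HasOuterApproxClosed M] [MeasurableSpace M] [BorelSpace M] {f : M → M} (hf : Continuous f)
    {μ : Measure M} [IsFiniteMeasure μ] {x : ℕ → M} {n : ℕ → ℕ} (hn : Tendsto n atTop atTop)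
    (hlim : ∀ g : M →ᵇ ℝ,
      Tendsto (fun k => ∫ y, g y ∂(empiric f (x k) (n k))) atTop (𝓝 (∫ y, g y ∂μ))) :
    Measure.map f μ = μ := by
  refine ext_of_forall_integral_eq_of_IsFiniteMeasure fun g => ?_
  rw [integral_map hf.aemeasurable g.continuous.aestronglyMeasurable]
  have hcomp : Tendsto (fun k => ∫ y, g (f y) ∂(empiric f (x k) (n k))) atTop
      (𝓝 (∫ y, g y ∂μ)) := by
    simpa using (tendsto_integral_empiric_comp_sub f (x := x) hn hf.measurable g).add (hlim g)
  exact tendsto_nhds_unique (hlim (g.compContinuous ⟨f, hf⟩)) hcomp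

theorem WeakPseudoPhysical.frequently_basinUpTo_nonempty {M : Type*} [MeasurableSpace M]
    {f : M → M} {dstar : Measure M → Measure M → ℝ} {Leb μ : Measure M}
    (hμ : WeakPseudoPhysical f dstar Leb μ) {ε : ℝ} (hε : 0 < ε) :
    ∃ᶠ n in atTop, (basinUpTo f dstar μ ε n).Nonempty := by
  intro hempty
  have hbot : ∀ᶠ n in atTop, logRate Leb (basinUpTo f dstar μ ε) n = ⊥ := by
    filter_upwards [hempty, eventually_gt_atTop 0] with n hn hn_pos
    rw [logRate, Set.not_nonempty_iff_eq_empty.mp hn, measure_empty, ENNReal.log_zero]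
    exact EReal.bot_mul_coe_of_pos (by positivity)
  have h0 := hμ ε hε
  rw [limsup_congr hbot, limsup_const] at h0
  exact EReal.bot_ne_zero h0

theorem stmt5_general {M : Type*} [MetricSpace M] [MeasurableSpace M] [BorelSpace M]
    (f : M → M) (hf : Continuous f)
    (Leb : Measure M)
    (dstar : Measure M → Measure M → ℝ) (hd : IsWeakStarMetric M dstar)
    (μ : Measure M) [IsProbabilityMeasure μ]
    (hwpp : WeakPseudoPhysical f dstar Leb μ) :
    Measure.map f μ = μ := by
  obtain ⟨n, hn_mono, hgood⟩ := extraction_forall_of_frequently fun k : ℕ =>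
    (hwpp.frequently_basinUpTo_nonempty (ε := 1 / ((k : ℝ) + 1))
      Nat.one_div_pos_of_nat).and_eventually (eventually_ne_atTop 0)
  choose x hx using fun k => (hgood k).1
  have hprob : ∀ k, IsProbabilityMeasure (empiric f (x k) (n k)) :=
    fun k => isProbabilityMeasure_empiric f (x k) (hgood k).2
  have hdist : Tendsto (fun k => dstar (empiric f (x k) (n k)) μ) atTop (𝓝 0) :=
    squeeze_zero (fun k => hd.nonneg _ _) (fun k => (hx k).le)
      tendsto_one_div_add_atTop_nhds_zero_nat
  have hlim := (hd.tendsto_iff _ μ hprob inferInstance).mp hdist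
  exact map_eq_self_of_tendsto_integral_empiric hf hn_mono.tendsto_atTop
    fun g => hlim g.toContinuousMap

/-- every weak pseudo-physical measure is `f`-invariant. -/
theorem stmt5 {M : Type*} [MetricSpace M] [CompactSpace M] [MeasurableSpace M] [BorelSpace M]
    (f : M → M) (hf : Continuous f)
    (Leb : Measure M) [IsProbabilityMeasure Leb]
    (hsupp : ∀ U : Set M, IsOpen U → U.Nonempty → 0 < Leb U)
    (dstar : Measure M → Measure M → ℝ) (hd : IsWeakStarMetric M dstar)
    (μ : Measure M) [IsProbabilityMeasure μ]
    (hwpp : WeakPseudoPhysical f dstar Leb μ) :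
    Measure.map f μ = μ :=
  stmt5_general f hf Leb dstar hd μ hwpp
end

section
/- Let f : M → M be a continuous map on a compact metric space M. The set P_f of weak pseudo-physical measures is closed in the weak* topology; in particular it is weak*-compact. -/
open MeasureTheory Filter Topology
open scoped ENNReal

/-! A weak* limit `μ` of weak pseudo-physical measures `μⱼ` is weak pseudo-physical: once
`dist*(μⱼ, μ) < ε/2`, the triangle inequality gives `A_{ε/2,n}(μⱼ) ⊆ A_{ε,n}(μ)` for every `n`, so
the exponential rate of `A_{ε,n}(μ)` is squeezed between that of `A_{ε/2,n}(μⱼ)`, whose limsup is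
`0`, and `0`. Since `dist*` is only known to detect convergence of sequences, closedness is
checked sequentially; this suffices because the weak* topology is metrizable here. Compactness
then comes from that of the space of probability measures on `M`. -/

section LogRate

variable {M : Type*} [MeasurableSpace M] (Leb : Measure M)

lemma logRate_nonpos [IsProbabilityMeasure Leb] (A : ℕ → Set M) (n : ℕ) : logRate Leb A n ≤ 0 :=
  mul_nonpos_of_nonpos_of_nonneg (ENNReal.log_le_zero_iff.mpr prob_le_one)
    (EReal.coe_nonneg.mpr (by positivity))

lemma logRate_mono {A B : ℕ → Set M} {n : ℕ} (h : A n ⊆ B n) :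
    logRate Leb A n ≤ logRate Leb B n :=
  mul_le_mul_of_nonneg_right (ENNReal.log_monotone (measure_mono h))
    (EReal.coe_nonneg.mpr (by positivity))

lemma limsup_logRate_eq_zero_of_subset [IsProbabilityMeasure Leb] {A B : ℕ → Set M}
    (hA : atTop.limsup (logRate Leb A) = 0) (hAB : ∀ n, A n ⊆ B n) :
    atTop.limsup (logRate Leb B) = 0 := by
  refine le_antisymm (limsup_le_of_le (h := .of_forall (logRate_nonpos Leb B))) ?_
  calc (0 : EReal) = atTop.limsup (logRate Leb A) := hA.symm
    _ ≤ atTop.limsup (logRate Leb B) :=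
      limsup_le_limsup (.of_forall fun n => logRate_mono Leb (hAB n))

end LogRate

lemma basinUpTo_subset_of_add_le {M : Type*} [MeasurableSpace M] (f : M → M)
    {dstar : Measure M → Measure M → ℝ} (htri : ∀ μ ν ρ, dstar μ ρ ≤ dstar μ ν + dstar ν ρ)
    {μ ν : Measure M} {δ ε : ℝ} (h : δ + dstar ν μ ≤ ε) (n : ℕ) :
    basinUpTo f dstar ν δ n ⊆ basinUpTo f dstar μ ε n := fun x hx =>
  calc dstar (empiric f x n) μ ≤ dstar (empiric f x n) ν + dstar ν μ := htri _ _ _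
    _ < ε := by linarith [show dstar (empiric f x n) ν < δ from hx]

lemma WeakPseudoPhysical.of_forall_exists_dstar_lt {M : Type*} [MeasurableSpace M] (f : M → M)
    {dstar : Measure M → Measure M → ℝ} (htri : ∀ μ ν ρ, dstar μ ρ ≤ dstar μ ν + dstar ν ρ)
    (Leb : Measure M) [IsProbabilityMeasure Leb] {μ : Measure M}
    (h : ∀ δ > 0, ∃ ν, WeakPseudoPhysical f dstar Leb ν ∧ dstar ν μ < δ) :
    WeakPseudoPhysical f dstar Leb μ := by
  intro ε hε
  obtain ⟨ν, hν, hνμ⟩ := h (ε / 2) (half_pos hε)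
  exact limsup_logRate_eq_zero_of_subset Leb (hν (ε / 2) (half_pos hε))
    (basinUpTo_subset_of_add_le f htri (by linarith))

lemma IsWeakStarMetric.tendsto_zero {M : Type*} [TopologicalSpace M] [CompactSpace M]
    [MeasurableSpace M] [OpensMeasurableSpace M] {dstar : Measure M → Measure M → ℝ}
    (hd : IsWeakStarMetric M dstar) {μs : ℕ → ProbabilityMeasure M} {μ : ProbabilityMeasure M}
    (hμ : Tendsto μs atTop (𝓝 μ)) :
    Tendsto (fun j => dstar (μs j) μ) atTop (𝓝 0) := by
  refine (hd.tendsto_iff _ _ (fun j => (μs j).prop) μ.prop).mpr fun g => ?_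
  simpa only [ProbabilityMeasure.val_eq_to_measure,
    BoundedContinuousFunction.mkOfCompact_apply] using
    ProbabilityMeasure.tendsto_iff_forall_integral_tendsto.mp hμ
      (BoundedContinuousFunction.mkOfCompact g)

lemma isSeqClosed_setOf_weakPseudoPhysical {M : Type*} [TopologicalSpace M] [CompactSpace M]
    [MeasurableSpace M] [OpensMeasurableSpace M] (f : M → M) (Leb : Measure M)
    [IsProbabilityMeasure Leb] {dstar : Measure M → Measure M → ℝ}
    (hd : IsWeakStarMetric M dstar) :
    IsSeqClosed {μ : ProbabilityMeasure M | WeakPseudoPhysical f dstar Leb μ} := by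
  intro μs μ hμs hμ
  refine WeakPseudoPhysical.of_forall_exists_dstar_lt f hd.triangle Leb fun δ hδ => ?_
  obtain ⟨j, hj⟩ := ((hd.tendsto_zero hμ).eventually_lt_const hδ).exists
  exact ⟨μs j, hμs j, hj⟩

theorem stmt6_general {M : Type*} [MetricSpace M] [CompactSpace M] [MeasurableSpace M] [BorelSpace M]
    (f : M → M)
    (Leb : Measure M) [IsProbabilityMeasure Leb]
    (dstar : Measure M → Measure M → ℝ) (hd : IsWeakStarMetric M dstar) :
    IsClosed {μ : ProbabilityMeasure M |
        WeakPseudoPhysical f dstar Leb (μ : Measure M)} ∧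
      IsCompact {μ : ProbabilityMeasure M |
        WeakPseudoPhysical f dstar Leb (μ : Measure M)} := by
  have hclosed := (isSeqClosed_setOf_weakPseudoPhysical f Leb hd).isClosed
  exact ⟨hclosed, hclosed.isCompact⟩

/-- the set of weak pseudo-physical measures is weak*-closed, and in
particular weak*-compact. -/
theorem stmt6 {M : Type*} [MetricSpace M] [CompactSpace M] [MeasurableSpace M] [BorelSpace M]
    (f : M → M) (hf : Continuous f)
    (Leb : Measure M) [IsProbabilityMeasure Leb]
    (dstar : Measure M → Measure M → ℝ) (hd : IsWeakStarMetric M dstar) :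
    IsClosed {μ : ProbabilityMeasure M |
        WeakPseudoPhysical f dstar Leb (μ : Measure M)} ∧
      IsCompact {μ : ProbabilityMeasure M |
        WeakPseudoPhysical f dstar Leb (μ : Measure M)} :=
  stmt6_general f Leb dstar hd
end

section
/- Let (X, μ) be a probability space and P a finite measurable partition of X. Suppose A ⊆ X is measurable with μ(A) > 1 − ε for some 0 < ε < 1/4, and let P_A := {Y ∈ P : Y ∩ A ≠ ∅}. Then the Shannon entropy H(P, μ) := −∑_{Y∈P} μ(Y) log μ(Y) satisfies H(P, μ) ≤ log #P_A + ε · log #P − ε log ε − (1−ε) log(1−ε). -/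
open MeasureTheory Real Finset

/-!
Split the cells into the set `S` of those meeting `A` and the rest; the rest has total mass
`b ≤ 1 - μ(A) < ε`. Concavity of `negMulLog` bounds the entropy of `k` cells of total mass `t` by
`negMulLog t + t log k`. Applied to both groups, the two group masses contribute the binary
entropy of `b`, which is at most that of `ε` since `binEntropy` increases on `[0, 1/2]`.
-/

theorem Real.sum_negMulLog_le_negMulLog_sum_add_mul_log_card {ι : Type*} (s : Finset ι)
    {p : ι → ℝ} (hp : ∀ i ∈ s, 0 ≤ p i) :
    ∑ i ∈ s, negMulLog (p i) ≤ negMulLog (∑ i ∈ s, p i) + (∑ i ∈ s, p i) * log #s := by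
  rcases s.eq_empty_or_nonempty with rfl | hs
  · simp
  have hn : (0 : ℝ) < #s := by exact_mod_cast hs.card_pos
  have jensen := concaveOn_negMulLog.le_map_sum (t := s) (w := fun _ ↦ (#s : ℝ)⁻¹)
    (fun _ _ ↦ by positivity) (by simp [hn.ne']) hp
  have hinv : negMulLog (#s : ℝ)⁻¹ = (#s : ℝ)⁻¹ * log #s := by simp [negMulLog, log_inv]
  simp only [smul_eq_mul, ← mul_sum, negMulLog_mul, hinv] at jensen
  refine le_of_mul_le_mul_left ?_ (inv_pos.2 hn)
  linear_combination jensen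

theorem Real.sum_negMulLog_le_of_sum_compl_le {ι : Type*} [Fintype ι] [DecidableEq ι]
    {p : ι → ℝ} (hp : ∀ i, 0 ≤ p i) (hsum : ∑ i, p i = 1) {s : Finset ι} {ε : ℝ}
    (hs : ∑ i ∈ sᶜ, p i ≤ ε) (hε : ε ≤ 2⁻¹) :
    ∑ i, negMulLog (p i) ≤ log #s + ε * log (Fintype.card ι) + binEntropy ε := by
  set a := ∑ i ∈ s, p i
  set b := ∑ i ∈ sᶜ, p i
  have hab : a + b = 1 := by rw [sum_add_sum_compl, hsum]
  have hb : 0 ≤ b := sum_nonneg fun i _ ↦ hp i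
  have hbin : negMulLog a + negMulLog b ≤ binEntropy ε := by
    have := binEntropy_strictMonoOn.monotoneOn ⟨hb, hs.trans hε⟩ ⟨hb.trans hs, hε⟩ hs
    rwa [binEntropy_eq_negMulLog_add_negMulLog_one_sub, ← hab, add_sub_cancel_right,
      add_comm] at this
  have hlog : log #sᶜ ≤ log (Fintype.card ι) := by
    rcases (#sᶜ).eq_zero_or_pos with h | h
    · simp [h, log_natCast_nonneg]
    · exact log_le_log (by positivity) (by exact_mod_cast card_le_univ sᶜ)
  have hgroup_s := sum_negMulLog_le_negMulLog_sum_add_mul_log_card s fun i _ ↦ hp i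
  have hgroup_sc := sum_negMulLog_le_negMulLog_sum_add_mul_log_card sᶜ fun i _ ↦ hp i
  have ha_log : a * log #s ≤ log #s :=
    mul_le_of_le_one_left (log_natCast_nonneg _) (by linarith)
  have hb_log : b * log #sᶜ ≤ ε * log (Fintype.card ι) :=
    mul_le_mul hs hlog (log_natCast_nonneg _) (hb.trans hs)
  rw [← sum_add_sum_compl s]
  linarith

theorem MeasureTheory.sum_measureReal_add_measureReal_le_one {X ι : Type*} [MeasurableSpace X]
    {μ : Measure X} [IsZeroOrProbabilityMeasure μ] {P : ι → Set X} {s : Finset ι}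
    (hmeas : ∀ i ∈ s, MeasurableSet (P i)) (hdisj : Set.PairwiseDisjoint ↑s P) {A : Set X}
    (hA : ∀ i ∈ s, Disjoint (P i) A) :
    ∑ i ∈ s, μ.real (P i) + μ.real A ≤ 1 := by
  rw [← measureReal_biUnion_finset hdisj hmeas, ← measureReal_union'
    (Set.disjoint_iUnion₂_left.2 hA) (s.measurableSet_biUnion hmeas) (measure_ne_top μ _)]
  exact measureReal_le_one

theorem stmt13_general {X : Type*} [MeasurableSpace X] (μ : Measure X) [IsProbabilityMeasure μ]
    {ι : Type*} [Fintype ι] (P : ι → Set X)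
    (hmeas : ∀ i, MeasurableSet (P i))
    (hdisj : Pairwise (Function.onFun Disjoint P))
    (hcover : (⋃ i, P i) = Set.univ)
    (A : Set X)
    (ε : ℝ) (hε4 : ε < 1 / 4)
    (hAbig : 1 - ε < (μ A).toReal) :
    ∑ i, Real.negMulLog ((μ (P i)).toReal) ≤
      Real.log (Nat.card {i : ι // (P i ∩ A).Nonempty})
        + ε * Real.log (Fintype.card ι)
        - ε * Real.log ε - (1 - ε) * Real.log (1 - ε) := by
  classical
  rw [Nat.card_eq_fintype_card, Fintype.card_subtype]
  set S := univ.filter fun i ↦ (P i ∩ A).Nonempty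
  have hsum : ∑ i, μ.real (P i) = 1 := by
    rw [← measureReal_iUnion_fintype hdisj hmeas, hcover, probReal_univ]
  have hmissing : ∑ i ∈ Sᶜ, μ.real (P i) + μ.real A ≤ 1 :=
    sum_measureReal_add_measureReal_le_one (fun i _ ↦ hmeas i) (hdisj.set_pairwise _)
      fun i hi ↦ by
        simpa [S, Set.not_nonempty_iff_eq_empty, Set.disjoint_iff_inter_eq_empty] using hi
  have key := sum_negMulLog_le_of_sum_compl_le (fun i ↦ measureReal_nonneg) hsum
    (s := S) (ε := ε) (by rw [measureReal_def] at hmissing; linarith) (by linarith)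
  simp only [binEntropy, log_inv, measureReal_def] at key
  linarith

/-- entropy-counting lemma. If `μ(A) > 1 − ε` with `0 < ε < 1/4`, then the
Shannon entropy of a finite partition `P` is bounded by `log #{Y ∈ P : Y ∩ A ≠ ∅}`
plus `ε log #P − ε log ε − (1−ε) log(1−ε)`. -/
theorem stmt13 {X : Type*} [MeasurableSpace X] (μ : Measure X) [IsProbabilityMeasure μ]
    {ι : Type*} [Fintype ι] (P : ι → Set X)
    (hmeas : ∀ i, MeasurableSet (P i))
    (hdisj : Pairwise (Function.onFun Disjoint P))
    (hcover : (⋃ i, P i) = Set.univ)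
    (A : Set X) (hA : MeasurableSet A)
    (ε : ℝ) (hε0 : 0 < ε) (hε4 : ε < 1 / 4)
    (hAbig : 1 - ε < (μ A).toReal) :
    ∑ i, Real.negMulLog ((μ (P i)).toReal) ≤
      Real.log (Nat.card {i : ι // (P i ∩ A).Nonempty})
        + ε * Real.log (Fintype.card ι)
        - ε * Real.log ε - (1 - ε) * Real.log (1 - ε) :=
  stmt13_general μ P hmeas hdisj hcover A ε hε4 hAbig
end
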